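/- arXiv:2110.08572 — 3 statements merged into one kernel-verified Lean document; each statement's English description precedes it below -/
import Mathlib

section
/- Let n ≥ 1 be an integer and A, B ∈ ℝ^{n×n}. Then the average over the standard basis directions satisfies (1/n) ∑_{i=1}^n ‖Broyd(B, A, e_i) − A‖_F² = (1 − 1/n) ‖B − A‖_F². -/
open Matrix

noncomputable def vecNorm {n : ℕ} (u : Fin n → ℝ) : ℝ := Real.sqrt (∑ i, u i ^ 2)

noncomputable def frobNorm {n : ℕ} (M : Matrix (Fin n) (Fin n) ℝ) : ℝ :=
  Real.sqrt (∑ i, ∑ j, M i j ^ 2)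

noncomputable def specNorm {n : ℕ} (M : Matrix (Fin n) (Fin n) ℝ) : ℝ :=
  sSup {r : ℝ | ∃ u : Fin n → ℝ, vecNorm u = 1 ∧ r = vecNorm (M.mulVec u)}

noncomputable def broyd {n : ℕ} (B A : Matrix (Fin n) (Fin n) ℝ) (u : Fin n → ℝ) :
    Matrix (Fin n) (Fin n) ℝ :=
  B + (∑ i, u i ^ 2)⁻¹ • ((A - B) * Matrix.vecMulVec u u)

noncomputable def matCLM {n : ℕ} (M : Matrix (Fin n) (Fin n) ℝ) :
    (Fin n → ℝ) →L[ℝ] (Fin n → ℝ) :=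
  LinearMap.toContinuousLinearMap M.mulVecLin

lemma frob_sq {n : ℕ} (M : Matrix (Fin n) (Fin n) ℝ) :
    frobNorm M ^ 2 = ∑ i, ∑ j, M i j ^ 2 := by
  unfold frobNorm
  rw [Real.sq_sqrt]
  exact Finset.sum_nonneg fun i _ => Finset.sum_nonneg fun j _ => sq_nonneg _

lemma broyd_entry {n : ℕ} (A B : Matrix (Fin n) (Fin n) ℝ) (i k j : Fin n) :
    (broyd B A (Pi.single i 1) - A) k j = if j = i then 0 else (B - A) k j := by
  have hsum : (∑ l, (Pi.single i 1 : Fin n → ℝ) l ^ 2) = 1 := by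
    simp [Pi.single_apply, sq, ite_zero_mul]
  have hm : (((A - B) * Matrix.vecMulVec (Pi.single i 1) (Pi.single i 1) : Matrix (Fin n) (Fin n) ℝ)) k j
      = (A - B) k i * (if j = i then 1 else 0) := by
    simp [Matrix.mul_apply, Matrix.vecMulVec_apply, Pi.single_apply, mul_ite,
      Finset.sum_ite_eq', mul_comm]
  simp only [broyd, hsum, inv_one, one_smul, Matrix.sub_apply, Matrix.add_apply, hm]
  by_cases h : j = i <;> simp [h, Matrix.sub_apply]

theorem random_broyden_progress_avg {n : ℕ} (hn : 1 ≤ n)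
    (A B : Matrix (Fin n) (Fin n) ℝ) :
    (1 / (n : ℝ)) * ∑ i : Fin n, frobNorm (broyd B A (Pi.single i 1) - A) ^ 2
      = (1 - 1 / (n : ℝ)) * frobNorm (B - A) ^ 2 := by
  have hn0 : (n : ℝ) ≠ 0 := by positivity
  have h1 : ∑ i : Fin n, frobNorm (broyd B A (Pi.single i 1) - A) ^ 2
      = ((n : ℝ) - 1) * ∑ k, ∑ j, (B - A) k j ^ 2 := by
    have : ∀ i : Fin n, frobNorm (broyd B A (Pi.single i 1) - A) ^ 2
        = ∑ k, ∑ j, (if j = i then 0 else (B - A) k j ^ 2) := by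
      intro i
      rw [frob_sq]
      refine Finset.sum_congr rfl fun k _ => Finset.sum_congr rfl fun j _ => ?_
      rw [broyd_entry]
      by_cases h : j = i <;> simp [h]
    simp only [this]
    rw [Finset.sum_comm]
    rw [Finset.mul_sum]
    refine Finset.sum_congr rfl fun k _ => ?_
    rw [Finset.sum_comm, Finset.mul_sum]
    refine Finset.sum_congr rfl fun j _ => ?_
    have hx : ∀ x : Fin n, (if j = x then (0:ℝ) else (B - A) k j ^ 2)
        = (B - A) k j ^ 2 - (if j = x then (B - A) k j ^ 2 else 0) := by
      intro x; split <;> ring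
    simp only [hx, Finset.sum_sub_distrib, Finset.sum_const, Finset.card_univ,
      Fintype.card_fin, Finset.sum_ite_eq, Finset.mem_univ, if_true, nsmul_eq_mul]
    ring
  rw [h1, frob_sq]
  field_simp
end

section
/- Let F : ℝⁿ → ℝⁿ be differentiable everywhere with Jacobian J(x), let x* ∈ ℝⁿ satisfy F(x*) = 0, and suppose ‖J(x) − J(x*)‖ ≤ M‖x − x*‖ for all x ∈ ℝⁿ, where M > 0. Let x, x₊ ∈ ℝⁿ, B ∈ ℝ^{n×n}, let u ∈ ℝⁿ be nonzero, and set B₊ := Broyd(B, J(x₊), u). Write σ := ‖B − J(x)‖_F, σ₊ := ‖B₊ − J(x₊)‖_F, r := ‖x − x*‖, r₊ := ‖x₊ − x*‖. Then σ₊² ≤ σ² + 2σ√n M (r + r₊) + n M² (r + r₊)². -/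
open Matrix

lemma vecNorm_nonneg {n : ℕ} (u : Fin n → ℝ) : 0 ≤ vecNorm u := Real.sqrt_nonneg _

lemma vecNorm_sq {n : ℕ} (u : Fin n → ℝ) : vecNorm u ^ 2 = ∑ i, u i ^ 2 :=
  Real.sq_sqrt (Finset.sum_nonneg fun i _ => sq_nonneg _)

lemma frobNorm_nonneg {n : ℕ} (A : Matrix (Fin n) (Fin n) ℝ) : 0 ≤ frobNorm A :=
  Real.sqrt_nonneg _

lemma frobNorm_sq {n : ℕ} (A : Matrix (Fin n) (Fin n) ℝ) :
    frobNorm A ^ 2 = ∑ i, ∑ j, A i j ^ 2 :=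
  Real.sq_sqrt (Finset.sum_nonneg fun i _ => Finset.sum_nonneg fun j _ => sq_nonneg _)

/-- Cauchy–Schwarz row-wise: `‖A v‖ ≤ ‖A‖_F ‖v‖`. -/
lemma mulVec_vecNorm_le {n : ℕ} (A : Matrix (Fin n) (Fin n) ℝ) (v : Fin n → ℝ) :
    vecNorm (A.mulVec v) ≤ frobNorm A * vecNorm v := by
  have h2 : vecNorm (A.mulVec v) ^ 2 ≤ (frobNorm A * vecNorm v) ^ 2 := by
    rw [vecNorm_sq, mul_pow, frobNorm_sq, vecNorm_sq, Finset.sum_mul]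
    refine Finset.sum_le_sum fun i _ => ?_
    simpa [Matrix.mulVec, dotProduct] using
      Finset.sum_mul_sq_le_sq_mul_sq Finset.univ (fun j => A i j) v
  nlinarith [h2, vecNorm_nonneg (A.mulVec v),
    mul_nonneg (frobNorm_nonneg A) (vecNorm_nonneg v)]

lemma specSet_bddAbove {n : ℕ} (A : Matrix (Fin n) (Fin n) ℝ) :
    BddAbove {r : ℝ | ∃ u : Fin n → ℝ, vecNorm u = 1 ∧ r = vecNorm (A.mulVec u)} := by
  refine ⟨frobNorm A, fun r hr => ?_⟩
  obtain ⟨u, hu1, rfl⟩ := hr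
  have := mulVec_vecNorm_le A u
  rwa [hu1, mul_one] at this

lemma vecNorm_single {n : ℕ} (j : Fin n) : vecNorm (Pi.single j 1 : Fin n → ℝ) = 1 := by
  unfold vecNorm
  rw [show (∑ i, (Pi.single j 1 : Fin n → ℝ) i ^ 2) = 1 by
    rw [Finset.sum_eq_single j] <;> simp +contextual [Pi.single_apply]]
  exact Real.sqrt_one

lemma col_vecNorm_le_spec {n : ℕ} (A : Matrix (Fin n) (Fin n) ℝ) (j : Fin n) :
    vecNorm (A.mulVec (Pi.single j 1)) ≤ specNorm A :=
  le_csSup (specSet_bddAbove A) ⟨Pi.single j 1, vecNorm_single j, rfl⟩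

lemma frob_le_sqrt_spec {n : ℕ} (hn : 0 < n) (A : Matrix (Fin n) (Fin n) ℝ) :
    frobNorm A ≤ Real.sqrt n * specNorm A := by
  have hspec0 : 0 ≤ specNorm A := by
    obtain ⟨j⟩ : Nonempty (Fin n) := Fin.pos_iff_nonempty.mp hn
    exact le_trans (vecNorm_nonneg _) (col_vecNorm_le_spec A j)
  have hcol : ∀ j, ∑ i, A i j ^ 2 ≤ specNorm A ^ 2 := by
    intro j
    have h := col_vecNorm_le_spec A j
    have := pow_le_pow_left₀ (vecNorm_nonneg _) h 2
    rw [vecNorm_sq] at this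
    calc ∑ i, A i j ^ 2 = ∑ i, A.mulVec (Pi.single j 1) i ^ 2 := by
          apply Finset.sum_congr rfl; intro i _
          simp [Matrix.mulVec_single]
      _ ≤ specNorm A ^ 2 := this
  have h2 : frobNorm A ^ 2 ≤ (Real.sqrt n * specNorm A) ^ 2 := by
    rw [frobNorm_sq, mul_pow, Real.sq_sqrt (Nat.cast_nonneg n), Finset.sum_comm]
    calc (∑ j, ∑ i, A i j ^ 2) ≤ ∑ _j : Fin n, specNorm A ^ 2 :=
          Finset.sum_le_sum fun j _ => hcol j
      _ = n * specNorm A ^ 2 := by simp [Finset.sum_const, mul_comm]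
  nlinarith [h2, frobNorm_nonneg A, mul_nonneg (Real.sqrt_nonneg (n:ℝ)) hspec0]

/-- Frobenius norm as a Euclidean norm, giving the triangle inequality. -/
lemma frobNorm_eq_norm {n : ℕ} (A : Matrix (Fin n) (Fin n) ℝ) :
    frobNorm A =
      ‖(WithLp.equiv 2 (Fin n × Fin n → ℝ)).symm (fun p => A p.1 p.2)‖ := by
  rw [EuclideanSpace.norm_eq]
  unfold frobNorm
  congr 1
  rw [Fintype.sum_prod_type]
  exact Finset.sum_congr rfl fun i _ => Finset.sum_congr rfl fun j _ => by
    simp [Real.norm_eq_abs, sq_abs]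

lemma frobNorm_add_le {n : ℕ} (A C : Matrix (Fin n) (Fin n) ℝ) :
    frobNorm (A + C) ≤ frobNorm A + frobNorm C := by
  rw [frobNorm_eq_norm, frobNorm_eq_norm, frobNorm_eq_norm]
  have : (WithLp.equiv 2 (Fin n × Fin n → ℝ)).symm (fun p => (A + C) p.1 p.2)
      = (WithLp.equiv 2 (Fin n × Fin n → ℝ)).symm (fun p => A p.1 p.2)
        + (WithLp.equiv 2 (Fin n × Fin n → ℝ)).symm (fun p => C p.1 p.2) := by
    rfl
  rw [this]
  exact norm_add_le _ _

lemma frobNorm_neg {n : ℕ} (A : Matrix (Fin n) (Fin n) ℝ) :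
    frobNorm (-A) = frobNorm A := by
  unfold frobNorm; congr 1; simp

theorem sigma_update_bound {n : ℕ} (F : (Fin n → ℝ) → (Fin n → ℝ))
    (J : (Fin n → ℝ) → Matrix (Fin n) (Fin n) ℝ)
    (hF : ∀ x, HasFDerivAt F (matCLM (J x)) x)
    (xs : Fin n → ℝ) (hxs : F xs = 0) (M : ℝ) (hM : 0 < M)
    (hLip : ∀ x, specNorm (J x - J xs) ≤ M * vecNorm (x - xs))
    (x xp : Fin n → ℝ) (B : Matrix (Fin n) (Fin n) ℝ)
    (u : Fin n → ℝ) (hu : u ≠ 0) :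
    frobNorm (broyd B (J xp) u - J xp) ^ 2
      ≤ frobNorm (B - J x) ^ 2
        + 2 * frobNorm (B - J x) * Real.sqrt n * M * (vecNorm (x - xs) + vecNorm (xp - xs))
        + n * M ^ 2 * (vecNorm (x - xs) + vecNorm (xp - xs)) ^ 2 := by
  have hn : 0 < n := by
    rcases Nat.eq_zero_or_pos n with h | h
    · exfalso; apply hu; subst h; funext i; exact i.elim0
    · exact h
  set D : Matrix (Fin n) (Fin n) ℝ := B - J xp with hD
  set S : ℝ := ∑ i, u i ^ 2 with hS
  have hSpos : 0 < S := by
    have : ∃ i, u i ≠ 0 := by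
      by_contra h
      push_neg at h
      exact hu (funext h)
    obtain ⟨i, hi⟩ := this
    exact Finset.sum_pos' (fun j _ => sq_nonneg _)
      ⟨i, Finset.mem_univ i, by positivity⟩
  set c : ℝ := S⁻¹ with hc
  have hcS : c * S = 1 := inv_mul_cancel₀ hSpos.ne'
  have hc0 : 0 ≤ c := inv_nonneg.mpr hSpos.le
  -- Step 1 : frobNorm (broyd ... - J xp) ≤ frobNorm D
  have step1 : frobNorm (broyd B (J xp) u - J xp) ≤ frobNorm D := by
    unfold frobNorm
    apply Real.sqrt_le_sqrt
    apply Finset.sum_le_sum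
    intro i _
    set s : ℝ := ∑ j, D i j * u j with hs
    have hEntry : ∀ j, (broyd B (J xp) u - J xp) i j = D i j - c * s * u j := by
      intro j
      simp only [broyd, Matrix.sub_apply, Matrix.add_apply, Matrix.smul_apply,
        smul_eq_mul]
      have e1 : ((J xp - B) * Matrix.vecMulVec u u) i j
          = (∑ k, (J xp - B) i k * u k) * u j := by
        simp only [Matrix.mul_apply, Matrix.vecMulVec_apply, Finset.sum_mul]
        exact Finset.sum_congr rfl fun k _ => by ring
      have e2 : (∑ k, (J xp - B) i k * u k) = -s := by
        rw [hs, ← Finset.sum_neg_distrib]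
        exact Finset.sum_congr rfl fun k _ => by
          simp only [Matrix.sub_apply, hD]; ring
      rw [e1, e2]
      simp only [hD, Matrix.sub_apply, hc, hS]
      ring
    calc ∑ j, (broyd B (J xp) u - J xp) i j ^ 2
        = ∑ j, (D i j ^ 2 - 2 * (c * s) * (D i j * u j) + (c * s) ^ 2 * u j ^ 2) := by
          apply Finset.sum_congr rfl; intro j _; rw [hEntry j]; ring
      _ = (∑ j, D i j ^ 2) - 2 * (c * s) * s + (c * s) ^ 2 * S := by
          rw [Finset.sum_add_distrib, Finset.sum_sub_distrib, ← Finset.mul_sum,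
            ← Finset.mul_sum, ← hs, hS]
      _ = (∑ j, D i j ^ 2) - c * s ^ 2 := by
          rw [show (c * s) ^ 2 * S = c * s ^ 2 * (c * S) from by ring, hcS]; ring
      _ ≤ ∑ j, D i j ^ 2 := by nlinarith [sq_nonneg s, hc0]
  -- Step 2 : frobNorm D ≤ frobNorm (B - J x) + √n M (r + r₊)
  have hJx : frobNorm (J x - J xs) ≤ Real.sqrt n * (M * vecNorm (x - xs)) :=
    le_trans (frob_le_sqrt_spec hn _)
      (mul_le_mul_of_nonneg_left (hLip x) (Real.sqrt_nonneg _))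
  have hJxp : frobNorm (J xs - J xp) ≤ Real.sqrt n * (M * vecNorm (xp - xs)) := by
    rw [show J xs - J xp = -(J xp - J xs) from by abel, frobNorm_neg]
    exact le_trans (frob_le_sqrt_spec hn _)
      (mul_le_mul_of_nonneg_left (hLip xp) (Real.sqrt_nonneg _))
  have step2 : frobNorm D ≤ frobNorm (B - J x)
      + Real.sqrt n * M * (vecNorm (x - xs) + vecNorm (xp - xs)) := by
    have h1 : frobNorm D ≤ frobNorm (B - J x) + frobNorm (J x - J xp) := by
      rw [show D = (B - J x) + (J x - J xp) from by rw [hD]; abel]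
      exact frobNorm_add_le _ _
    have h2 : frobNorm (J x - J xp) ≤ frobNorm (J x - J xs) + frobNorm (J xs - J xp) := by
      rw [show J x - J xp = (J x - J xs) + (J xs - J xp) from by abel]
      exact frobNorm_add_le _ _
    have := add_le_add hJx hJxp
    nlinarith [this, h1, h2]
  -- combine
  have hfin : frobNorm (broyd B (J xp) u - J xp) ≤ frobNorm (B - J x)
      + Real.sqrt n * M * (vecNorm (x - xs) + vecNorm (xp - xs)) :=
    le_trans step1 step2
  have hnn : 0 ≤ frobNorm (broyd B (J xp) u - J xp) := frobNorm_nonneg _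
  have hsq : Real.sqrt n ^ 2 = (n : ℝ) := Real.sq_sqrt (Nat.cast_nonneg n)
  have hb : 0 ≤ frobNorm (B - J x)
      + Real.sqrt n * M * (vecNorm (x - xs) + vecNorm (xp - xs)) := le_trans hnn hfin
  have hsqle : frobNorm (broyd B (J xp) u - J xp) ^ 2
      ≤ (frobNorm (B - J x)
        + Real.sqrt n * M * (vecNorm (x - xs) + vecNorm (xp - xs))) ^ 2 :=
    pow_le_pow_left₀ hnn hfin 2
  calc frobNorm (broyd B (J xp) u - J xp) ^ 2
      ≤ (frobNorm (B - J x)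
        + Real.sqrt n * M * (vecNorm (x - xs) + vecNorm (xp - xs))) ^ 2 := hsqle
    _ = frobNorm (B - J x) ^ 2
        + 2 * frobNorm (B - J x) * Real.sqrt n * M * (vecNorm (x - xs) + vecNorm (xp - xs))
        + Real.sqrt n ^ 2 * M ^ 2 * (vecNorm (x - xs) + vecNorm (xp - xs)) ^ 2 := by ring
    _ = frobNorm (B - J x) ^ 2
        + 2 * frobNorm (B - J x) * Real.sqrt n * M * (vecNorm (x - xs) + vecNorm (xp - xs))
        + n * M ^ 2 * (vecNorm (x - xs) + vecNorm (xp - xs)) ^ 2 := by rw [hsq]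
end

section
/- Let F : ℝⁿ → ℝⁿ be differentiable everywhere with Jacobian J(x), let x* ∈ ℝⁿ satisfy F(x*) = 0 with J* := J(x*) invertible and c := ‖J*⁻¹‖, and suppose ‖J(x) − J(x*)‖ ≤ M‖x − x*‖ for all x ∈ ℝⁿ, where M > 0. Let x ∈ ℝⁿ, let B ∈ ℝ^{n×n} be invertible, and set x₊ := x − B⁻¹F(x). Write σ := ‖B − J(x)‖_F and r := ‖x − x*‖. If c(σ + M r) < 1, then ‖x₊ − x*‖ ≤ ((3cMr/2 + cσ)/(1 − c(σ + M r))) · r. -/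
open Matrix

/-!
Write `v = x₊ - x*`, `d = x - x*`, `r = ‖d‖`. Since `B (x₊ - x) = -F x` and `F x* = 0`,
`B v = (B - J x) d + (J x - J*) d - (F x - F x* - J* d)`, and the Lipschitz bound on `J` along
the segment `[x*, x]` gives the Taylor estimate `‖F x - F x* - J* d‖ ≤ M r² / 2`, so
`‖B v‖ ≤ σ r + M r² + M r² / 2`. On the other hand `J* v = B v - (B - J x) v - (J x - J*) v`, so
`‖v‖ ≤ c ‖J* v‖ ≤ c (‖B v‖ + (σ + M r) ‖v‖)`, and solving for `‖v‖` gives the bound.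
Only `‖B - J x‖ ≤ σ` is needed of `σ`, and the Frobenius norm dominates the operator norm.
The matrix statement is transported to `EuclideanSpace ℝ (Fin n)`, where `vecNorm` is the norm.
-/

open Set WithLp

theorem norm_image_sub_sub_fderiv_le_of_norm_fderiv_sub_le {E G : Type*}
    [NormedAddCommGroup E] [NormedSpace ℝ E] [NormedAddCommGroup G] [NormedSpace ℝ G]
    {f : E → G} {f' : E → E →L[ℝ] G} {a b : E} {M : ℝ}
    (hf : ∀ y ∈ segment ℝ a b, HasFDerivAt f (f' y) y)
    (hf' : ∀ y ∈ segment ℝ a b, ‖f' y - f' a‖ ≤ M * ‖y - a‖) :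
    ‖f b - f a - f' a (b - a)‖ ≤ M / 2 * ‖b - a‖ ^ 2 := by
  set d := b - a
  set g : ℝ → G := fun t => f (a + t • d) - f a - t • f' a d
  have hmem : ∀ t ∈ Icc (0 : ℝ) 1, a + t • d ∈ segment ℝ a b := fun t ht =>
    (convex_segment a b).add_smul_sub_mem (left_mem_segment ℝ a b) (right_mem_segment ℝ a b) ht
  have hg : ∀ t ∈ Icc (0 : ℝ) 1, HasDerivAt g ((f' (a + t • d) - f' a) d) t := by
    intro t ht
    have hline : HasDerivAt (fun s : ℝ => a + s • d) d t := by
      simpa using ((hasDerivAt_id t).smul_const d).const_add a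
    convert ((hf _ (hmem t ht)).comp_hasDerivAt t hline).sub_const (f a) |>.sub
      (by simpa using (hasDerivAt_id t).smul_const (f' a d)) using 1
    · rfl
    · exact sub_apply _ _ _
  have hbound : ∀ t ∈ Ico (0 : ℝ) 1, ‖(f' (a + t • d) - f' a) d‖ ≤ M * ‖d‖ ^ 2 * t := by
    intro t ht
    calc ‖(f' (a + t • d) - f' a) d‖ ≤ ‖f' (a + t • d) - f' a‖ * ‖d‖ :=
          (f' (a + t • d) - f' a).le_opNorm d
      _ ≤ M * ‖t • d‖ * ‖d‖ := by
          gcongr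
          simpa using hf' _ (hmem t (Ico_subset_Icc_self ht))
      _ = M * ‖d‖ ^ 2 * t := by rw [norm_smul, Real.norm_of_nonneg ht.1]; ring
  have hB : ∀ t : ℝ, HasDerivAt (fun s => M / 2 * ‖d‖ ^ 2 * s ^ 2) (M * ‖d‖ ^ 2 * t) t :=
    fun t => ((hasDerivAt_pow 2 t).const_mul (M / 2 * ‖d‖ ^ 2)).congr_deriv (by norm_num; ring)
  have := image_norm_le_of_norm_deriv_right_le_deriv_boundary
    (fun t ht => (hg t ht).continuousAt.continuousWithinAt)
    (fun t ht => (hg t (Ico_subset_Icc_self ht)).hasDerivWithinAt) (by simp [g]) hB hbound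
    (right_mem_Icc.2 zero_le_one)
  simpa [g, d] using this

theorem norm_sub_le_of_quasiNewton_step {E : Type*} [NormedAddCommGroup E] [NormedSpace ℝ E]
    {F : E → E} {J : E → E →L[ℝ] E} {xs x xp : E} {K B : E →L[ℝ] E} {c M σ : ℝ}
    (hF : ∀ y ∈ segment ℝ xs x, HasFDerivAt F (J y) y)
    (hLip : ∀ y ∈ segment ℝ xs x, ‖J y - J xs‖ ≤ M * ‖y - xs‖)
    (hxs : F xs = 0) (hK : K * J xs = 1) (hKc : ‖K‖ ≤ c) (hσ : ‖B - J x‖ ≤ σ)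
    (hxp : B (xp - x) = -F x) (hmain : c * (σ + M * ‖x - xs‖) < 1) :
    ‖xp - xs‖ ≤ (3 * c * M * ‖x - xs‖ / 2 + c * σ) / (1 - c * (σ + M * ‖x - xs‖)) * ‖x - xs‖ := by
  set d := x - xs
  set r := ‖d‖
  set v := xp - xs
  have hc : 0 ≤ c := (norm_nonneg K).trans hKc
  have hJx : ‖J x - J xs‖ ≤ M * r := hLip x (right_mem_segment ℝ xs x)
  have hTaylor : ‖F x - F xs - J xs d‖ ≤ M / 2 * r ^ 2 :=
    norm_image_sub_sub_fderiv_le_of_norm_fderiv_sub_le hF hLip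
  have hBv : B v = (B - J x) d + (J x - J xs) d - (F x - F xs - J xs d) := by
    rw [show v = (xp - x) + d from (sub_add_sub_cancel xp x xs).symm, map_add, hxp, hxs]
    simp only [_root_.sub_apply]
    abel
  have hpert : ∀ u, ‖(B - J x) u + (J x - J xs) u‖ ≤ (σ + M * r) * ‖u‖ := fun u => by
    rw [add_mul]
    refine (norm_add_le _ _).trans (add_le_add ?_ ?_)
    · exact ((B - J x).le_opNorm u).trans (by gcongr)
    · exact ((J x - J xs).le_opNorm u).trans (by gcongr)
  have hBv_le : ‖B v‖ ≤ (σ + M * r) * r + M / 2 * r ^ 2 := by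
    rw [hBv]
    exact (norm_sub_le _ _).trans (add_le_add (hpert d) hTaylor)
  have hJv : J xs v = B v - ((B - J x) v + (J x - J xs) v) := by
    simp only [_root_.sub_apply]
    abel
  have hv_le : ‖v‖ ≤ c * (‖B v‖ + (σ + M * r) * ‖v‖) :=
    calc ‖v‖ = ‖K (J xs v)‖ := by rw [← mul_apply_eq_comp, hK, one_apply_eq_self]
      _ ≤ c * ‖J xs v‖ := (K.le_opNorm _).trans (by gcongr)
      _ ≤ c * (‖B v‖ + (σ + M * r) * ‖v‖) := by
        rw [hJv]
        gcongr
        exact (norm_sub_le _ _).trans (add_le_add le_rfl (hpert v))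
  rw [div_mul_eq_mul_div, le_div_iff₀ (by linarith)]
  nlinarith [mul_le_mul_of_nonneg_left hBv_le hc]

section EuclideanTransport

variable {n : ℕ}

lemma vecNorm_eq_norm (u : Fin n → ℝ) : vecNorm u = ‖toLp 2 u‖ := by
  simp [vecNorm, EuclideanSpace.norm_eq]

lemma vecNorm_smul (a : ℝ) (u : Fin n → ℝ) : vecNorm (a • u) = |a| * vecNorm u := by
  simp [vecNorm_eq_norm, norm_smul]

lemma vecNorm_mulVec_le_frobNorm_mul (A : Matrix (Fin n) (Fin n) ℝ) (u : Fin n → ℝ) :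
    vecNorm (A *ᵥ u) ≤ frobNorm A * vecNorm u := by
  rw [vecNorm, vecNorm, frobNorm, ← Real.sqrt_mul (by positivity), Finset.sum_mul]
  gcongr with i
  exact Finset.sum_mul_sq_le_sq_mul_sq Finset.univ (A i) u

lemma specNorm_nonneg (A : Matrix (Fin n) (Fin n) ℝ) : 0 ≤ specNorm A :=
  Real.sSup_nonneg fun _ ⟨_, _, hr⟩ => hr ▸ Real.sqrt_nonneg _

lemma vecNorm_mulVec_le_specNorm_mul (A : Matrix (Fin n) (Fin n) ℝ) (u : Fin n → ℝ) :
    vecNorm (A *ᵥ u) ≤ specNorm A * vecNorm u := by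
  obtain rfl | hu := eq_or_ne u 0
  · simp [vecNorm]
  have hpos : 0 < vecNorm u := by simpa [vecNorm_eq_norm] using hu
  have hbdd : BddAbove {r | ∃ w : Fin n → ℝ, vecNorm w = 1 ∧ r = vecNorm (A *ᵥ w)} :=
    ⟨frobNorm A, fun _ ⟨w, hw, hr⟩ => hr ▸ by simpa [hw] using vecNorm_mulVec_le_frobNorm_mul A w⟩
  have hunit : vecNorm ((vecNorm u)⁻¹ • u) = 1 := by
    rw [vecNorm_smul, abs_of_pos (inv_pos.2 hpos), inv_mul_cancel₀ hpos.ne']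
  have h := le_csSup hbdd ⟨_, hunit, rfl⟩
  rw [mulVec_smul, vecNorm_smul, abs_of_pos (inv_pos.2 hpos), inv_mul_le_iff₀ hpos] at h
  rw [specNorm, mul_comm]
  exact h

lemma norm_toEuclideanCLM_le_specNorm (A : Matrix (Fin n) (Fin n) ℝ) :
    ‖toEuclideanCLM (n := Fin n) (𝕜 := ℝ) A‖ ≤ specNorm A :=
  ContinuousLinearMap.opNorm_le_bound _ (specNorm_nonneg A) fun u => by
    have h := vecNorm_mulVec_le_specNorm_mul A (ofLp u)
    rwa [vecNorm_eq_norm, vecNorm_eq_norm] at h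

lemma norm_toEuclideanCLM_le_frobNorm (A : Matrix (Fin n) (Fin n) ℝ) :
    ‖toEuclideanCLM (n := Fin n) (𝕜 := ℝ) A‖ ≤ frobNorm A :=
  ContinuousLinearMap.opNorm_le_bound _ (Real.sqrt_nonneg _) fun u => by
    have h := vecNorm_mulVec_le_frobNorm_mul A (ofLp u)
    rwa [vecNorm_eq_norm, vecNorm_eq_norm] at h

lemma hasFDerivAt_toLp_comp_ofLp {F : (Fin n → ℝ) → Fin n → ℝ}
    {A : Matrix (Fin n) (Fin n) ℝ} {y : EuclideanSpace ℝ (Fin n)}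
    (h : HasFDerivAt F (matCLM A) (ofLp y)) :
    HasFDerivAt (fun z : EuclideanSpace ℝ (Fin n) => toLp 2 (F (ofLp z)))
      (toEuclideanCLM (n := Fin n) (𝕜 := ℝ) A) y := by
  let e := EuclideanSpace.equiv (Fin n) ℝ
  exact (e.symm.hasFDerivAt.comp y (h.comp y e.hasFDerivAt)).congr_fderiv (by ext; rfl)

end EuclideanTransport

theorem r_update_bound_general {n : ℕ} (F : (Fin n → ℝ) → (Fin n → ℝ))
    (J : (Fin n → ℝ) → Matrix (Fin n) (Fin n) ℝ)
    (hF : ∀ x, HasFDerivAt F (matCLM (J x)) x)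
    (xs : Fin n → ℝ) (hxs : F xs = 0) (hJs : IsUnit (J xs))
    (c : ℝ) (hc : c = specNorm (J xs)⁻¹)
    (M : ℝ)
    (hLip : ∀ x, specNorm (J x - J xs) ≤ M * vecNorm (x - xs))
    (x : Fin n → ℝ) (B : Matrix (Fin n) (Fin n) ℝ) (hB : IsUnit B)
    (hmain : c * (frobNorm (B - J x) + M * vecNorm (x - xs)) < 1) :
    vecNorm ((x - B⁻¹.mulVec (F x)) - xs)
      ≤ (3 * c * M * vecNorm (x - xs) / 2 + c * frobNorm (B - J x))
          / (1 - c * (frobNorm (B - J x) + M * vecNorm (x - xs)))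
        * vecNorm (x - xs) := by
  let toE := toEuclideanCLM (n := Fin n) (𝕜 := ℝ)
  have hstep : B *ᵥ ((x - B⁻¹ *ᵥ F x) - x) = -F x := by
    rw [sub_sub_cancel_left, mulVec_neg, mulVec_mulVec,
      mul_nonsing_inv _ ((isUnit_iff_isUnit_det B).1 hB), one_mulVec]
  have key := norm_sub_le_of_quasiNewton_step (E := EuclideanSpace ℝ (Fin n))
    (F := fun y => toLp 2 (F (ofLp y))) (J := fun y => toE (J (ofLp y)))
    (xs := toLp 2 xs) (x := toLp 2 x) (xp := toLp 2 (x - B⁻¹ *ᵥ F x))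
    (K := toE (J xs)⁻¹) (B := toE B) (σ := frobNorm (B - J x))
    (fun y _ => hasFDerivAt_toLp_comp_ofLp (hF _))
    (fun y _ => by
      rw [← map_sub]
      exact (norm_toEuclideanCLM_le_specNorm _).trans
        (by simpa [vecNorm_eq_norm] using hLip (ofLp y)))
    (by simp [hxs])
    (by rw [← map_mul, nonsing_inv_mul _ ((isUnit_iff_isUnit_det _).1 hJs), map_one])
    (hc ▸ norm_toEuclideanCLM_le_specNorm _)
    (by rw [← map_sub]; exact norm_toEuclideanCLM_le_frobNorm _)
    (by rw [← toLp_sub, toEuclideanCLM_toLp, hstep, toLp_neg])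
    (by simpa [vecNorm_eq_norm] using hmain)
  simpa [vecNorm_eq_norm] using key

theorem r_update_bound {n : ℕ} (F : (Fin n → ℝ) → (Fin n → ℝ))
    (J : (Fin n → ℝ) → Matrix (Fin n) (Fin n) ℝ)
    (hF : ∀ x, HasFDerivAt F (matCLM (J x)) x)
    (xs : Fin n → ℝ) (hxs : F xs = 0) (hJs : IsUnit (J xs))
    (c : ℝ) (hc : c = specNorm (J xs)⁻¹)
    (M : ℝ) (hM : 0 < M)
    (hLip : ∀ x, specNorm (J x - J xs) ≤ M * vecNorm (x - xs))
    (x : Fin n → ℝ) (B : Matrix (Fin n) (Fin n) ℝ) (hB : IsUnit B)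
    (hmain : c * (frobNorm (B - J x) + M * vecNorm (x - xs)) < 1) :
    vecNorm ((x - B⁻¹.mulVec (F x)) - xs)
      ≤ (3 * c * M * vecNorm (x - xs) / 2 + c * frobNorm (B - J x))
          / (1 - c * (frobNorm (B - J x) + M * vecNorm (x - xs)))
        * vecNorm (x - xs) :=
  r_update_bound_general F J hF xs hxs hJs c hc M hLip x B hB hmain
end
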